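/- For τ ∈ (0,1], define t_τ > 0 by τ cosh t_τ = 1 and s_τ = (1/2) ∫₀^{t_τ} dt / √(1 - τ² cosh² t). Then s_τ + (1/4) log τ² remains bounded as τ → 0⁺; i.e., there exists C > 0 and τ₀ > 0 such that |s_τ + (1/2) log τ| ≤ C for all τ ∈ (0, τ₀). -/

import Mathlib

/-!
On `[0, t_τ)` the number `a = τ cosh u` lies in `[0, 1)`, and
`1 ≤ 1 / √(1 - a²) ≤ 1 + a / √(1 - a²)`. The majorant has the explicit primitive
`u + arcsin (τ sinh u / √(1 - τ²))`, which increases by exactly `t_τ + π / 2` on `[0, t_τ]`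
because `τ sinh t_τ = √(1 - τ²)`. Hence `2 s_τ` lies in
`[t_τ, t_τ + π / 2]`, while `1 / τ = cosh t_τ ≤ e^{t_τ} ≤ 2 cosh t_τ = 2 / τ` gives
`-log τ ≤ t_τ ≤ log 2 - log τ`.
-/

open Real Set MeasureTheory intervalIntegral

namespace Delaunay

lemma neg_log_le_of_mul_cosh_eq_one {τ t : ℝ} (hτ : 0 < τ) (ht : 0 ≤ t) (h : τ * cosh t = 1) :
    -log τ ≤ t := by
  rw [← log_inv, log_le_iff_le_exp (inv_pos.2 hτ), ← eq_inv_of_mul_eq_one_right h, cosh_eq]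
  linarith [exp_le_exp.2 (show -t ≤ t by linarith)]

lemma le_log_two_sub_log_of_mul_cosh_eq_one {τ t : ℝ} (hτ : 0 < τ) (h : τ * cosh t = 1) :
    t ≤ log 2 - log τ := by
  rw [← log_div two_ne_zero hτ.ne', le_log_iff_exp_le (by positivity), div_eq_mul_inv,
    ← eq_inv_of_mul_eq_one_right h, cosh_eq]
  linarith [exp_pos (-t)]

lemma one_le_one_div_sqrt_one_sub_sq {a : ℝ} (ha : a ^ 2 < 1) : 1 ≤ 1 / √(1 - a ^ 2) :=
  one_le_one_div (sqrt_pos.2 (by linarith)) (sqrt_le_one.2 (by nlinarith))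

lemma one_div_sqrt_one_sub_sq_le {a : ℝ} (ha₀ : 0 ≤ a) (ha₁ : a ≤ 1) :
    1 / √(1 - a ^ 2) ≤ 1 + a / √(1 - a ^ 2) := by
  have hsqrt : 1 - a ≤ √(1 - a ^ 2) := by
    rw [le_sqrt (by linarith) (by nlinarith)]
    nlinarith
  rw [← sub_le_iff_le_add, ← sub_div]
  exact div_le_one_of_le₀ hsqrt (sqrt_nonneg _)

lemma hasDerivAt_add_arcsin {τ u : ℝ} (hτ : τ ^ 2 < 1) (hu : τ ^ 2 * cosh u ^ 2 < 1) :
    HasDerivAt (fun v => v + arcsin (τ * sinh v / √(1 - τ ^ 2)))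
      (1 + τ * cosh u / √(1 - τ ^ 2 * cosh u ^ 2)) u := by
  set x := τ * sinh u / √(1 - τ ^ 2)
  have hτ₀ : 1 - τ ^ 2 ≠ 0 := (sub_pos.2 hτ).ne'
  have hx : 1 - x ^ 2 = (1 - τ ^ 2 * cosh u ^ 2) / (1 - τ ^ 2) := by
    rw [div_pow, sq_sqrt (by linarith)]
    field_simp
    linear_combination τ ^ 2 * cosh_sq u
  have hx1 : |x| < 1 := by
    rw [← sq_lt_one_iff_abs_lt_one]
    linarith [div_pos (sub_pos.2 hu) (sub_pos.2 hτ)]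
  have harcsin := (hasDerivAt_arcsin (abs_lt.1 hx1).1.ne' (abs_lt.1 hx1).2.ne).comp u
    (((hasDerivAt_sinh u).const_mul τ).div_const √(1 - τ ^ 2))
  refine ((hasDerivAt_id u).add harcsin).congr_deriv ?_
  rw [hx, sqrt_div (by linarith)]
  field_simp [(sqrt_pos.2 (sub_pos.2 hτ)).ne', (sqrt_pos.2 (sub_pos.2 hu)).ne']

lemma mul_cosh_lt_one {τ t u : ℝ} (hτ : 0 < τ) (h : τ * cosh t = 1) (hu : |u| < |t|) :
    τ * cosh u < 1 :=
  h ▸ mul_lt_mul_of_pos_left (cosh_lt_cosh.2 hu) hτ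

lemma mul_cosh_le_one {τ t u : ℝ} (hτ : 0 ≤ τ) (h : τ * cosh t = 1) (hu : |u| ≤ |t|) :
    τ * cosh u ≤ 1 :=
  h ▸ mul_le_mul_of_nonneg_left (cosh_le_cosh.2 hu) hτ

lemma sq_mul_cosh_sq_lt_one {τ t u : ℝ} (hτ : 0 < τ) (h : τ * cosh t = 1) (hu : |u| < |t|) :
    τ ^ 2 * cosh u ^ 2 < 1 := by
  rw [← mul_pow]
  exact pow_lt_one₀ (by positivity) (mul_cosh_lt_one hτ h hu) two_ne_zero

lemma abs_lt_abs_of_mem_Ioo {u t : ℝ} (hu : u ∈ Ioo 0 t) : |u| < |t| := by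
  rw [abs_of_pos hu.1, abs_of_pos (hu.1.trans hu.2)]
  exact hu.2

section QuarterPeriod

variable {τ t : ℝ}

lemma hasDerivAt_add_arcsin_of_mem_Ioo (hτ : 0 < τ) (h : τ * cosh t = 1) :
    ∀ u ∈ Ioo 0 t, HasDerivAt (fun v => v + arcsin (τ * sinh v / √(1 - τ ^ 2)))
      (1 + τ * cosh u / √(1 - τ ^ 2 * cosh u ^ 2)) u := by
  intro u hu
  have hτ1 : τ ^ 2 < 1 := by
    simpa using sq_mul_cosh_sq_lt_one hτ h
      (show |(0 : ℝ)| < |t| by simpa using (hu.1.trans hu.2).ne')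
  exact hasDerivAt_add_arcsin hτ1 (sq_mul_cosh_sq_lt_one hτ h (abs_lt_abs_of_mem_Ioo hu))

lemma intervalIntegrable_one_add_mul_cosh_div_sqrt (hτ : 0 < τ) (ht : 0 < t) (h : τ * cosh t = 1) :
    IntervalIntegrable (fun u => 1 + τ * cosh u / √(1 - τ ^ 2 * cosh u ^ 2)) volume 0 t := by
  apply intervalIntegrable_deriv_of_nonneg
    (g := fun v => v + arcsin (τ * sinh v / √(1 - τ ^ 2))) (by fun_prop)
  · simpa [ht.le] using hasDerivAt_add_arcsin_of_mem_Ioo hτ h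
  · intro u _
    have := cosh_pos u
    positivity

lemma integral_one_add_mul_cosh_div_sqrt (hτ : 0 < τ) (ht : 0 < t) (h : τ * cosh t = 1) :
    ∫ u in 0..t, (1 + τ * cosh u / √(1 - τ ^ 2 * cosh u ^ 2)) = t + π / 2 := by
  have hsinh : τ * sinh t = √(1 - τ ^ 2) := by
    rw [eq_comm, sqrt_eq_iff_eq_sq (by nlinarith [cosh_sq t]) (by positivity [sinh_pos_iff.2 ht])]
    linear_combination τ ^ 2 * cosh_sq t - (τ * cosh t + 1) * h
  rw [integral_eq_sub_of_hasDerivAt_of_le ht.le (by fun_prop)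
    (hasDerivAt_add_arcsin_of_mem_Ioo hτ h)
    (intervalIntegrable_one_add_mul_cosh_div_sqrt hτ ht h), hsinh,
    div_self (hsinh ▸ (mul_pos hτ (sinh_pos_iff.2 ht))).ne']
  simp

lemma one_div_sqrt_mem_Icc (hτ : 0 < τ) (h : τ * cosh t = 1) {u : ℝ} (hu : |u| < |t|) :
    1 / √(1 - τ ^ 2 * cosh u ^ 2) ∈ Icc 1 (1 + τ * cosh u / √(1 - τ ^ 2 * cosh u ^ 2)) := by
  have hlt := sq_mul_cosh_sq_lt_one hτ h hu
  rw [← mul_pow] at hlt ⊢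
  exact ⟨one_le_one_div_sqrt_one_sub_sq hlt,
    one_div_sqrt_one_sub_sq_le (by positivity) (mul_cosh_lt_one hτ h hu).le⟩

lemma intervalIntegrable_one_div_sqrt (hτ : 0 < τ) (ht : 0 < t) (h : τ * cosh t = 1) :
    IntervalIntegrable (fun u => 1 / √(1 - τ ^ 2 * cosh u ^ 2)) volume 0 t := by
  refine (intervalIntegrable_one_add_mul_cosh_div_sqrt hτ ht h).mono_fun'
    (by fun_prop : Measurable _).aestronglyMeasurable
    (ae_restrict_of_forall_mem measurableSet_uIoc fun u hu => ?_)
  rw [uIoc_of_le ht.le] at hu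
  dsimp only
  rw [norm_of_nonneg (by positivity), ← mul_pow]
  exact one_div_sqrt_one_sub_sq_le (by positivity [cosh_pos u])
    (mul_cosh_le_one hτ.le h (abs_le_abs_of_nonneg hu.1.le hu.2))

lemma le_integral_one_div_sqrt (hτ : 0 < τ) (ht : 0 < t) (h : τ * cosh t = 1) :
    t ≤ ∫ u in 0..t, 1 / √(1 - τ ^ 2 * cosh u ^ 2) := by
  have hmono := integral_mono_on_of_le_Ioo ht.le intervalIntegrable_const
    (intervalIntegrable_one_div_sqrt hτ ht h) fun u hu => (one_div_sqrt_mem_Icc hτ h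
      (abs_lt_abs_of_mem_Ioo hu)).1
  simpa using hmono

lemma integral_one_div_sqrt_le (hτ : 0 < τ) (ht : 0 < t) (h : τ * cosh t = 1) :
    ∫ u in 0..t, 1 / √(1 - τ ^ 2 * cosh u ^ 2) ≤ t + π / 2 := by
  rw [← integral_one_add_mul_cosh_div_sqrt hτ ht h]
  exact integral_mono_on_of_le_Ioo ht.le
    (intervalIntegrable_one_div_sqrt hτ ht h) (intervalIntegrable_one_add_mul_cosh_div_sqrt hτ ht h)
    fun u hu => (one_div_sqrt_mem_Icc hτ h (abs_lt_abs_of_mem_Ioo hu)).2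

end QuarterPeriod

end Delaunay

open Delaunay

open intervalIntegral in
theorem delaunay_period_asymptotics :
    ∃ C > 0, ∃ τ₀ > 0, ∀ τ : ℝ, 0 < τ → τ < τ₀ →
      ∀ t : ℝ, 0 < t → τ * Real.cosh t = 1 →
        |(1 / 2) * (∫ u in (0:ℝ)..t, 1 / Real.sqrt (1 - τ ^ 2 * Real.cosh u ^ 2))
          + (1 / 2) * Real.log τ| ≤ C := by
  refine ⟨2, two_pos, 1, one_pos, fun τ hτ _ t ht h => ?_⟩
  have hlower := le_integral_one_div_sqrt hτ ht h
  have hupper := integral_one_div_sqrt_le hτ ht h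
  have ht_lower := neg_log_le_of_mul_cosh_eq_one hτ ht.le h
  have ht_upper := le_log_two_sub_log_of_mul_cosh_eq_one hτ h
  have hlog_two := log_two_lt_d9
  have hpi := pi_le_four
  rw [abs_le]
  constructor <;> linarith
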